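/- arXiv:1806.06544 — 3 statements merged into one kernel-verified Lean document; each statement's English description precedes it below -/
import Mathlib

section
/- For φ ∈ ℂ^N the following are equivalent: (i) ⟪φ, γ₀γₙψ⟫ = 0 for every ψ ∈ ℂ^N satisfying γₙψ = iψ; (ii) γₙφ = iφ. In other words, the adjoint boundary condition of the MIT bag boundary condition is again the MIT bag boundary condition. -/
open Matrix

private lemma inner_mulVec_left {N : ℕ} (A : Matrix (Fin N) (Fin N) ℂ)
    (x y : EuclideanSpace ℂ (Fin N)) :
    (@inner ℂ (EuclideanSpace ℂ (Fin N)) _ x (WithLp.toLp 2 (A.mulVec y)) : ℂ)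
      = @inner ℂ (EuclideanSpace ℂ (Fin N)) _ (WithLp.toLp 2 (Aᴴ.mulVec x)) y := by
  simp only [EuclideanSpace.inner_eq_star_dotProduct]
  show A.mulVec y ⬝ᵥ star (x : Fin N → ℂ) = y ⬝ᵥ star (Aᴴ.mulVec (x : Fin N → ℂ))
  rw [Matrix.star_mulVec, Matrix.conjTranspose_conjTranspose, dotProduct_comm, dotProduct_mulVec]
  exact dotProduct_comm _ _

/-- The adjoint boundary condition of the MIT bag boundary condition is again the MIT
bag boundary condition: `⟪φ, γ₀γₙψ⟫ = 0` holds for all `ψ` with `γₙψ = iψ` if and only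
if `γₙφ = iφ`. -/
theorem MIT_adjoint_boundary_condition
    (N : ℕ) (hN : 0 < N) (γ₀ γₙ : Matrix (Fin N) (Fin N) ℂ)
    (h0H : γ₀ᴴ = γ₀) (hnH : γₙᴴ = -γₙ)
    (h0sq : γ₀ * γ₀ = 1) (hnsq : γₙ * γₙ = -1)
    (hanti : γ₀ * γₙ = -(γₙ * γ₀))
    (φ : EuclideanSpace ℂ (Fin N)) :
    (∀ ψ : EuclideanSpace ℂ (Fin N), γₙ.mulVec ψ = Complex.I • (ψ : Fin N → ℂ) →
        (@inner ℂ (EuclideanSpace ℂ (Fin N)) _ φ (WithLp.toLp 2 ((γ₀ * γₙ).mulVec ψ)) : ℂ) = 0)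
      ↔ γₙ.mulVec φ = Complex.I • (φ : Fin N → ℂ) := by
  constructor
  · intro h
    set B : Matrix (Fin N) (Fin N) ℂ := γ₀ * γₙ * (1 - Complex.I • γₙ) with hB
    have hBH : Bᴴ = γ₀ * γₙ - Complex.I • γ₀ := by
      simp only [hB, Matrix.conjTranspose_mul, Matrix.conjTranspose_sub,
        Matrix.conjTranspose_smul, Matrix.conjTranspose_one, h0H, hnH,
        Complex.star_def, Complex.conj_I]
      have e1 : ((1 : Matrix (Fin N) (Fin N) ℂ) - (-Complex.I) • -γₙ) * (-γₙ * γ₀)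
          = -(γₙ * γ₀) + Complex.I • ((γₙ * γₙ) * γ₀) := by
        noncomm_ring
        match_scalars <;> simp
      rw [e1, hnsq, ← hanti]
      noncomm_ring
      match_scalars <;> simp
    have hmat : γₙ * ((1 : Matrix (Fin N) (Fin N) ℂ) - Complex.I • γₙ)
        = Complex.I • ((1 : Matrix (Fin N) (Fin N) ℂ) - Complex.I • γₙ) := by
      rw [Matrix.mul_sub, Matrix.mul_one, Matrix.mul_smul, hnsq, smul_sub, smul_smul,
        Complex.I_mul_I]
      noncomm_ring
      match_scalars <;> simp
    have key : ∀ χ : EuclideanSpace ℂ (Fin N),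
        (@inner ℂ (EuclideanSpace ℂ (Fin N)) _ φ (WithLp.toLp 2 (B.mulVec χ)) : ℂ) = 0 := by
      intro χ
      set ψ : EuclideanSpace ℂ (Fin N) :=
        WithLp.toLp 2 (((1 : Matrix (Fin N) (Fin N) ℂ) - Complex.I • γₙ).mulVec χ) with hψ
      have heig : γₙ.mulVec ψ = Complex.I • (ψ : Fin N → ℂ) := by
        show γₙ.mulVec (((1 : Matrix (Fin N) (Fin N) ℂ) - Complex.I • γₙ).mulVec χ)
          = Complex.I • (((1 : Matrix (Fin N) (Fin N) ℂ) - Complex.I • γₙ).mulVec χ)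
        rw [Matrix.mulVec_mulVec, hmat, Matrix.smul_mulVec]
      have := h ψ heig
      rwa [show ((γ₀ * γₙ).mulVec ψ) = B.mulVec χ by
        show (γ₀ * γₙ).mulVec (((1 : Matrix (Fin N) (Fin N) ℂ) - Complex.I • γₙ).mulVec χ)
          = B.mulVec χ
        rw [Matrix.mulVec_mulVec]] at this
    have hv : Bᴴ.mulVec (φ : Fin N → ℂ) = 0 := by
      have h2 := key (WithLp.toLp 2 (Bᴴ.mulVec (φ : Fin N → ℂ)))
      rw [inner_mulVec_left] at h2
      exact congrArg WithLp.ofLp ((inner_self_eq_zero (𝕜 := ℂ) (E := EuclideanSpace ℂ (Fin N))).mp h2)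
    rw [hBH] at hv
    have hm2 : γ₀ * (γ₀ * γₙ - Complex.I • γ₀) = γₙ - Complex.I • (1 : Matrix (Fin N) (Fin N) ℂ) := by
      rw [Matrix.mul_sub, ← Matrix.mul_assoc, h0sq, Matrix.one_mul, Matrix.mul_smul, h0sq]
    have hv2 := congrArg (γ₀.mulVec) hv
    rw [Matrix.mulVec_zero, Matrix.mulVec_mulVec, hm2, Matrix.sub_mulVec,
      Matrix.smul_mulVec, Matrix.one_mulVec] at hv2
    exact sub_eq_zero.mp hv2
  · intro hφ ψ hψ
    have key : (γ₀ * γₙ).mulVec ψ = Complex.I • γ₀.mulVec (ψ : Fin N → ℂ) := by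
      rw [← Matrix.mulVec_mulVec, hψ, Matrix.mulVec_smul]
    set c : ℂ := @inner ℂ (EuclideanSpace ℂ (Fin N)) _ φ (WithLp.toLp 2 (γ₀.mulVec ψ)) with hc
    have h1 : (@inner ℂ (EuclideanSpace ℂ (Fin N)) _ φ (WithLp.toLp 2 ((γ₀ * γₙ).mulVec ψ)) : ℂ)
        = Complex.I * c := by
      rw [show (WithLp.toLp 2 ((γ₀ * γₙ).mulVec ψ) : EuclideanSpace ℂ (Fin N))
          = (Complex.I • (WithLp.toLp 2 (γ₀.mulVec ψ) : EuclideanSpace ℂ (Fin N))) by rw [key, WithLp.toLp_smul]]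
      rw [inner_smul_right (𝕜 := ℂ) φ (WithLp.toLp 2 (γ₀.mulVec ψ) : EuclideanSpace ℂ (Fin N)) Complex.I, ← hc]
    have h2 : (@inner ℂ (EuclideanSpace ℂ (Fin N)) _ φ (WithLp.toLp 2 ((γ₀ * γₙ).mulVec ψ)) : ℂ)
        = -(Complex.I * c) := by
      rw [hanti]
      rw [show (WithLp.toLp 2 ((-(γₙ * γ₀)).mulVec ψ) : EuclideanSpace ℂ (Fin N))
          = (-(WithLp.toLp 2 (γₙ.mulVec (WithLp.toLp 2 (γ₀.mulVec (ψ : Fin N → ℂ)) : EuclideanSpace ℂ (Fin N)))) : EuclideanSpace ℂ (Fin N)) by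
        rw [Matrix.neg_mulVec, WithLp.ofLp_toLp, Matrix.mulVec_mulVec, WithLp.toLp_neg]]
      rw [inner_neg_right, inner_mulVec_left γₙ, hnH]
      rw [show (WithLp.toLp 2 ((-γₙ).mulVec (φ : Fin N → ℂ)) : EuclideanSpace ℂ (Fin N))
          = (-(Complex.I • (φ : EuclideanSpace ℂ (Fin N))) : EuclideanSpace ℂ (Fin N)) by
        rw [Matrix.neg_mulVec, hφ, WithLp.toLp_neg, WithLp.toLp_smul, WithLp.toLp_ofLp]]
      rw [inner_neg_left, neg_neg,
        inner_smul_left (𝕜 := ℂ) φ (WithLp.toLp 2 (γ₀.mulVec ψ) : EuclideanSpace ℂ (Fin N)) Complex.I,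
        Complex.conj_I, ← hc]
      ring
    have hcc : Complex.I * c = -(Complex.I * c) := h1.symm.trans h2
    have hc0 : c = 0 := by linear_combination (-Complex.I / 2) * hcc + c * Complex.I_sq
    rw [h1, hc0, mul_zero]
end

section
/- The kernel of the MIT bag boundary operator has dimension exactly N/2; precisely, 2 · dim_ℂ ker(γₙ - i·Id) = N. In particular N is even and the MIT bag boundary condition has constant kernel dimension. -/
open Matrix

/-- The kernel of the MIT bag boundary operator `𝖬 = γₙ - i` has dimension exactly
`N/2`: precisely, `2 · dim_ℂ ker(γₙ - i·Id) = N`. In particular `N` is even. -/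
theorem MIT_kernel_dimension
    (N : ℕ) (hN : 0 < N) (γ₀ γₙ : Matrix (Fin N) (Fin N) ℂ)
    (h0H : γ₀ᴴ = γ₀) (hnH : γₙᴴ = -γₙ)
    (h0sq : γ₀ * γ₀ = 1) (hnsq : γₙ * γₙ = -1)
    (hanti : γ₀ * γₙ = -(γₙ * γ₀)) :
    2 * Module.finrank ℂ (LinearMap.ker (Matrix.toEuclideanLin (γₙ - Complex.I • 1))) = N := by
  classical
  set Mm : Matrix (Fin N) (Fin N) ℂ := γₙ - Complex.I • 1 with hMm
  set Pm : Matrix (Fin N) (Fin N) ℂ := γₙ + Complex.I • 1 with hPm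
  -- matrix identities
  have hMPm : Mm * Pm = 0 := by
    have : Mm * Pm = γₙ * γₙ + 1 := by
      simp only [hMm, hPm, sub_mul, mul_add, Matrix.smul_mul, Matrix.mul_smul,
        Matrix.one_mul, Matrix.mul_one, smul_smul, Complex.I_mul_I, neg_smul, one_smul]
      abel
    rw [this, hnsq]; abel
  have hconj : γ₀ * Mm = -(Pm * γ₀) := by
    simp only [hMm, hPm, mul_sub, add_mul, Matrix.smul_mul, Matrix.mul_smul,
      Matrix.one_mul, Matrix.mul_one, hanti]
    abel
  -- pass to linear maps
  have hmul : ∀ A B : Matrix (Fin N) (Fin N) ℂ,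
      Matrix.toEuclideanLin (A * B) = (Matrix.toEuclideanLin A) ∘ₗ (Matrix.toEuclideanLin B) := by
    intro A B
    rw [Matrix.toEuclideanLin_eq_toLin]
    exact Matrix.toLin_mul _ _ _ A B
  set T := (Matrix.toEuclideanLin : Matrix (Fin N) (Fin N) ℂ ≃ₗ[ℂ]
    (EuclideanSpace ℂ (Fin N) →ₗ[ℂ] EuclideanSpace ℂ (Fin N))) with hT
  -- ker (T Mm) = range (T Pm)
  have hkr : LinearMap.ker (T Mm) = LinearMap.range (T Pm) := by
    apply le_antisymm
    · intro v hv
      rw [LinearMap.mem_ker] at hv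
      refine ⟨(2 * Complex.I)⁻¹ • v, ?_⟩
      have h1 : T Pm v = T Mm v + (2 * Complex.I) • v := by
        have : Pm = Mm + (2 * Complex.I) • 1 := by
          simp only [hMm, hPm, two_mul, add_smul]; abel
        rw [this, map_add, LinearMap.add_apply, _root_.map_smul]
        congr 1
        have : (T (1 : Matrix (Fin N) (Fin N) ℂ)) = LinearMap.id := by
          rw [hT, Matrix.toEuclideanLin_eq_toLin]; exact Matrix.toLin_one _
        rw [LinearMap.smul_apply, this]; rfl
      rw [_root_.map_smul, h1, hv, zero_add, smul_smul, inv_mul_cancel₀ (by simp [Complex.I_ne_zero]),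
        one_smul]
    · rintro _ ⟨v, rfl⟩
      rw [LinearMap.mem_ker, ← LinearMap.comp_apply, ← hmul, hMPm]
      simp
  -- ker (T Mm) and ker (T Pm) have the same dimension, via γ₀
  have hg : (T γ₀) ∘ₗ (T γ₀) = LinearMap.id := by
    rw [← hmul, h0sq, hT, Matrix.toEuclideanLin_eq_toLin]; exact Matrix.toLin_one _
  set ge : EuclideanSpace ℂ (Fin N) ≃ₗ[ℂ] EuclideanSpace ℂ (Fin N) :=
    LinearEquiv.ofLinear (T γ₀) (T γ₀) hg hg with hge
  have hker_comap : LinearMap.ker (T Mm) =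
      Submodule.comap (ge : EuclideanSpace ℂ (Fin N) →ₗ[ℂ] EuclideanSpace ℂ (Fin N))
        (LinearMap.ker (T Pm)) := by
    ext v
    simp only [LinearMap.mem_ker, Submodule.mem_comap]
    have hc : (T γ₀) ∘ₗ (T Mm) = -((T Pm) ∘ₗ (T γ₀)) := by
      rw [← hmul, ← hmul, hconj, map_neg]
    constructor
    · intro hv
      have : ((T Pm) ∘ₗ (T γ₀)) v = 0 := by
        have := congrArg (fun f => - f v) hc
        simpa [hv] using this.symm
      simpa [hge] using this
    · intro hv
      have h1 : (T γ₀) ((T Mm) v) = 0 := by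
        have := congrArg (fun f => f v) hc
        simp only [LinearMap.comp_apply, LinearMap.neg_apply] at this
        rw [this]
        simpa [hge] using congrArg Neg.neg hv
      have h2 : (T γ₀) ((T γ₀) ((T Mm) v)) = (T Mm) v := by
        have := congrArg (fun f => f ((T Mm) v)) hg
        simpa using this
      rw [h1, map_zero] at h2
      exact h2.symm
  have hdim_eq : Module.finrank ℂ (LinearMap.ker (T Mm)) =
      Module.finrank ℂ (LinearMap.ker (T Pm)) := by
    rw [hker_comap]
    rw [show Submodule.comap (ge : EuclideanSpace ℂ (Fin N) →ₗ[ℂ] EuclideanSpace ℂ (Fin N))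
        (LinearMap.ker (T Pm)) = Submodule.map (ge.symm : EuclideanSpace ℂ (Fin N) →ₗ[ℂ]
        EuclideanSpace ℂ (Fin N)) (LinearMap.ker (T Pm)) from
      (Submodule.map_equiv_eq_comap_symm ge.symm _).symm]
    exact LinearEquiv.finrank_map_eq ge.symm _
  -- rank-nullity
  have hrn : Module.finrank ℂ (LinearMap.range (T Pm)) +
      Module.finrank ℂ (LinearMap.ker (T Pm)) = N := by
    rw [LinearMap.finrank_range_add_finrank_ker (T Pm)]
    simp
  rw [← hkr] at hrn
  omega
end

section
/- Let n ≥ 1 and let γ₀, γ₁, …, γₙ be N×N complex matrices with γ₀ᴴ = γ₀, γ₀² = Id, γⱼᴴ = -γⱼ for 1 ≤ j ≤ n, γⱼγₖ + γₖγⱼ = -2δⱼₖ·Id for 1 ≤ j,k ≤ n, and γ₀γⱼ = -γⱼγ₀ for 1 ≤ j ≤ n. Then for every α = (α₁,…,αₙ) ∈ ℝⁿ with α₁² + ⋯ + αₙ² < 1, the matrix Id + Σⱼ αⱼ·γ₀γⱼ is positive definite. -/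
open Matrix ComplexOrder

/-- Hyperbolicity condition (H) for the system `𝔖 = -iγ₀𝖣 + λId`: for every
`α ∈ ℝⁿ` with `|α|² < 1`, the principal symbol `Id + Σⱼ αⱼ·γ₀γⱼ` is positive
definite. -/
theorem principal_symbol_posDef
    (n N : ℕ) (hn : 1 ≤ n) (hN : 0 < N)
    (γ₀ : Matrix (Fin N) (Fin N) ℂ) (γ : Fin n → Matrix (Fin N) (Fin N) ℂ)
    (h0H : γ₀ᴴ = γ₀) (h0sq : γ₀ * γ₀ = 1)
    (hjH : ∀ j, (γ j)ᴴ = -(γ j))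
    (hcl : ∀ j k, γ j * γ k + γ k * γ j = if j = k then -((2 : ℂ) • 1) else 0)
    (h0j : ∀ j, γ₀ * γ j = -(γ j * γ₀)) :
    ∀ α : Fin n → ℝ, (∑ j, (α j) ^ 2) < 1 →
      Matrix.PosDef ((1 : Matrix (Fin N) (Fin N) ℂ) + ∑ j, (α j : ℂ) • (γ₀ * γ j)) := by
  intro α hα
  set s : ℝ := ∑ j, (α j) ^ 2 with hs
  have hs0 : 0 ≤ s := Finset.sum_nonneg fun j _ => sq_nonneg _
  set A : Matrix (Fin N) (Fin N) ℂ := ∑ j, (α j : ℂ) • (γ₀ * γ j) with hA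
  have hγγ : ∀ j, γ j * γ₀ = -(γ₀ * γ j) := fun j => by rw [h0j j, neg_neg]
  -- A is Hermitian
  have hAH : Aᴴ = A := by
    rw [hA, conjTranspose_sum]
    refine Finset.sum_congr rfl fun j _ => ?_
    rw [conjTranspose_smul, conjTranspose_mul, h0H, hjH, Complex.star_def,
      Complex.conj_ofReal, neg_mul, hγγ j, neg_neg]
  -- mixed products
  have hmix : ∀ j k, γ₀ * γ j * (γ₀ * γ k) = -(γ j * γ k) := fun j k => by
    rw [← mul_assoc, mul_assoc γ₀ (γ j) γ₀, hγγ j, mul_neg, ← mul_assoc, h0sq, one_mul,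
      neg_mul]
  -- A² = s • 1
  set S : Matrix (Fin N) (Fin N) ℂ :=
    ∑ j, ∑ k, ((α j : ℂ) * (α k : ℂ)) • (γ j * γ k) with hS
  have hSS : S + S = ((-2 * s : ℝ) : ℂ) • 1 := by
    have h1 : S = ∑ j, ∑ k, ((α k : ℂ) * (α j : ℂ)) • (γ k * γ j) := by
      rw [hS, Finset.sum_comm]
    nth_rewrite 2 [h1]
    rw [hS, ← Finset.sum_add_distrib]
    have : ∀ j ∈ Finset.univ, (∑ k, ((α j : ℂ) * (α k : ℂ)) • (γ j * γ k)) +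
        (∑ k, ((α k : ℂ) * (α j : ℂ)) • (γ k * γ j))
        = ((α j : ℂ) * (α j : ℂ)) • (-((2:ℂ) • 1)) := by
      intro j _
      rw [← Finset.sum_add_distrib]
      rw [Finset.sum_eq_single j]
      · rw [mul_comm ((α j : ℂ)), ← smul_add, hcl, if_pos rfl]
      · intro k _ hk
        rw [mul_comm ((α k : ℂ)), ← smul_add, hcl, if_neg (Ne.symm hk), smul_zero]
      · intro h; exact absurd (Finset.mem_univ j) h
    rw [Finset.sum_congr rfl this, ← Finset.sum_smul]
    have hsum : (∑ j, (α j : ℂ) * (α j : ℂ)) = ((s : ℝ) : ℂ) := by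
      rw [hs]; push_cast; exact Finset.sum_congr rfl fun j _ => (sq (α j : ℂ)).symm
    rw [hsum]
    push_cast
    rw [smul_neg, smul_smul]
    ring_nf
    rw [neg_smul]
  have hSval : S = ((-s : ℝ) : ℂ) • 1 := by
    have h2 : (2 : ℂ) • S = ((-2 * s : ℝ) : ℂ) • 1 := by rw [two_smul]; exact hSS
    have h3 : S = (2 : ℂ)⁻¹ • ((2 : ℂ) • S) := by rw [smul_smul]; norm_num
    rw [h3, h2, smul_smul]
    congr 1
    push_cast; ring
  have hA2 : A * A = ((s : ℝ) : ℂ) • 1 := by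
    rw [hA, Finset.sum_mul_sum]
    have : ∀ j, ∀ k, ((α j : ℂ) • (γ₀ * γ j)) * ((α k : ℂ) • (γ₀ * γ k))
        = -(((α j : ℂ) * (α k : ℂ)) • (γ j * γ k)) := by
      intro j k
      rw [smul_mul_smul_comm, hmix, smul_neg]
    calc (∑ j, ∑ k, ((α j : ℂ) • (γ₀ * γ j)) * ((α k : ℂ) • (γ₀ * γ k)))
        = ∑ j, ∑ k, -(((α j : ℂ) * (α k : ℂ)) • (γ j * γ k)) := by
          exact Finset.sum_congr rfl fun j _ => Finset.sum_congr rfl fun k _ => this j k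
      _ = -S := by rw [hS]; simp [Finset.sum_neg_distrib]
      _ = ((s : ℝ) : ℂ) • 1 := by rw [hSval]; push_cast; rw [neg_smul, neg_neg]
  refine Matrix.PosDef.of_dotProduct_mulVec_pos ?_ ?_
  · show (1 + A)ᴴ = 1 + A
    rw [conjTranspose_add, conjTranspose_one, hAH]
  · intro x hx
    set v : EuclideanSpace ℂ (Fin N) := (WithLp.equiv 2 _).symm x with hv
    set w : EuclideanSpace ℂ (Fin N) := (WithLp.equiv 2 _).symm (A *ᵥ x) with hw
    have hb : (inner ℂ v w) = star x ⬝ᵥ (A *ᵥ x) :=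
      (EuclideanSpace.inner_toLp_toLp _ _).trans (dotProduct_comm _ _)
    have hvv : (inner ℂ v v) = star x ⬝ᵥ x := (EuclideanSpace.inner_toLp_toLp _ _).trans (dotProduct_comm _ _)
    have hdot : ∀ u : Fin N → ℂ, star (A *ᵥ x) ⬝ᵥ (A *ᵥ u) = star x ⬝ᵥ ((Aᴴ * A) *ᵥ u) := by
      intro u
      rw [star_mulVec, dotProduct_mulVec, vecMul_vecMul, ← dotProduct_mulVec]
    have hww : (inner ℂ w w) = ((s : ℝ) : ℂ) * (star x ⬝ᵥ x) := by
      rw [show inner ℂ w w = star (A *ᵥ x) ⬝ᵥ (A *ᵥ x) from (EuclideanSpace.inner_toLp_toLp _ _).trans (dotProduct_comm _ _), hdot x, hAH, hA2, smul_mulVec,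
        one_mulVec, dotProduct_smul, smul_eq_mul]
    have hnv : (inner ℂ v v) = (‖v‖ : ℂ) ^ 2 := inner_self_eq_norm_sq_to_K v
    have hnw : (inner ℂ w w) = (‖w‖ : ℂ) ^ 2 := inner_self_eq_norm_sq_to_K w
    have hv0 : v ≠ 0 := fun h => hx (by simpa [hv] using congrArg (WithLp.equiv 2 _) h)
    have hvpos : 0 < ‖v‖ := norm_pos_iff.mpr hv0
    have hwv : ‖w‖ ^ 2 = s * ‖v‖ ^ 2 := by
      have : (‖w‖ : ℂ) ^ 2 = ((s : ℝ) : ℂ) * (‖v‖ : ℂ) ^ 2 := by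
        rw [← hnw, hww, ← hvv, hnv]
      exact_mod_cast this
    have hwlt : ‖w‖ < ‖v‖ := by
      refine lt_of_pow_lt_pow_left₀ 2 (norm_nonneg v) ?_
      rw [hwv]
      calc s * ‖v‖ ^ 2 < 1 * ‖v‖ ^ 2 :=
            mul_lt_mul_of_pos_right hα (by positivity)
        _ = ‖v‖ ^ 2 := one_mul _
    have hCS : ‖(inner ℂ v w)‖ ≤ ‖v‖ * ‖w‖ := norm_inner_le_norm v w
    -- the inner product with A is real
    have hbre : (starRingEnd ℂ) (star x ⬝ᵥ (A *ᵥ x)) = star x ⬝ᵥ (A *ᵥ x) := by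
      have h1 : (starRingEnd ℂ) (inner ℂ v w) = (inner ℂ w v) :=
        inner_conj_symm w v
      have h2 : (inner ℂ w v) = star (A *ᵥ x) ⬝ᵥ x :=
        (EuclideanSpace.inner_toLp_toLp _ _).trans (dotProduct_comm _ _)
      have h3 : star (A *ᵥ x) ⬝ᵥ x = star x ⬝ᵥ (A *ᵥ x) := by
        rw [star_mulVec, dotProduct_mulVec, hAH]
      rw [← hb, h1, h2, h3]; exact hb.symm
    have him : (star x ⬝ᵥ (A *ᵥ x)).im = 0 := Complex.conj_eq_iff_im.mp hbre
    have habs : |(star x ⬝ᵥ (A *ᵥ x)).re| ≤ ‖v‖ * ‖w‖ := by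
      calc |(star x ⬝ᵥ (A *ᵥ x)).re| ≤ ‖star x ⬝ᵥ (A *ᵥ x)‖ :=
            Complex.abs_re_le_norm _
        _ = ‖(inner ℂ v w)‖ := by rw [hb]
        _ ≤ ‖v‖ * ‖w‖ := hCS
    rw [add_mulVec, one_mulVec, dotProduct_add, Complex.lt_def]
    have hre : (star x ⬝ᵥ x).re = ‖v‖ ^ 2 := by
      rw [← hvv, hnv, ← Complex.ofReal_pow]; exact Complex.ofReal_re _
    have him2 : (star x ⬝ᵥ x).im = 0 := by
      rw [← hvv, hnv, ← Complex.ofReal_pow]; exact Complex.ofReal_im _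
    constructor
    · simp only [Complex.add_re, Complex.zero_re, hre]
      have h4 : -(‖v‖ * ‖w‖) ≤ (star x ⬝ᵥ (A *ᵥ x)).re := neg_le_of_abs_le habs
      nlinarith
    · simp [him, him2]
end
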